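/- (Contiguous relation for terminating ₃φ₂ series, type II.) Let 0<q<1, N ∈ ℕ, and let B, C, D, E be nonzero complex numbers such that none of (q;q)_t, (D;q)_t, (E;q)_t, (Dq;q)_t, (Eq;q)_t, (Eq²;q)_t vanishes on the relevant ranges, and D ≠ 1, E ≠ 1, Eq ≠ 1. Set A = q^{-N}. Then (1−A)(1−B)(1−C)·(DE/(ABC)) / ((1−D)(1−E)(1−Eq)) · ₃φ₂(Aq, Bq, Cq; Dq, Eq²; q, DE/(ABC)) = ₃φ₂(A, B, C; D, E; q, DE/(ABC)) − ₃φ₂(A, B, C; D, Eq; q, DEq/(ABC)). -/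

import Mathlib

/-!
Compare the series term by term. With `z = DE/(ABC)`, the two series on the right share the
factor `(A;q)_t (B;q)_t (C;q)_t z^t / ((q;q)_t (D;q)_t)`, and
`1/(E;q)_t - q^t/(Eq;q)_t = (1 - q^t)/(E;q)_{t+1}`. The factor `1 - q^t` kills the term `t = 0`
and turns `(q;q)_t` into `(q;q)_{t-1}`; after the shift `t = s + 1`, pulling one factor out of
each `q`-shifted factorial via `(a;q)_{s+1} = (1 - a) (aq;q)_s` gives the `s`-th term of the
left-hand side. The last term `s = N` of the left-hand side vanishes because `(A;q)_{N+1} = 0`.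
-/

/-- Finite q-shifted factorial `(a;q)_n = ∏_{j=0}^{n-1} (1 - a q^j)`. -/
noncomputable def qPoch (q a : ℂ) (n : ℕ) : ℂ :=
  ∏ j ∈ Finset.range n, (1 - a * q ^ j)

lemma qPoch_succ (q a : ℂ) (n : ℕ) :
    qPoch q a (n + 1) = qPoch q a n * (1 - a * q ^ n) :=
  Finset.prod_range_succ _ _

lemma qPoch_succ' (q a : ℂ) (n : ℕ) :
    qPoch q a (n + 1) = (1 - a) * qPoch q (a * q) n := by
  simp only [qPoch, Finset.prod_range_succ', pow_zero, mul_one, mul_assoc, ← pow_succ']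
  ring

lemma qPoch_eq_zero_of_mul_pow_eq_one {q a : ℂ} {n : ℕ} (h : a * q ^ n = 1) :
    qPoch q a (n + 1) = 0 := by
  rw [qPoch_succ, h, sub_self, mul_zero]

lemma inv_qPoch_sub_pow_mul_inv_qPoch_mul {q e : ℂ} {n : ℕ} (h : qPoch q e (n + 1) ≠ 0) :
    (qPoch q e n)⁻¹ - q ^ n * (qPoch q (e * q) n)⁻¹ = (1 - q ^ n) * (qPoch q e (n + 1))⁻¹ := by
  have h_left : (qPoch q e n)⁻¹ = (1 - e * q ^ n) * (qPoch q e (n + 1))⁻¹ := by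
    rw [qPoch_succ] at h ⊢
    rw [mul_inv, mul_left_comm, mul_inv_cancel₀ (right_ne_zero_of_mul h), mul_one]
  have h_right : (qPoch q (e * q) n)⁻¹ = (1 - e) * (qPoch q e (n + 1))⁻¹ := by
    rw [qPoch_succ'] at h ⊢
    rw [mul_inv, ← mul_assoc, mul_inv_cancel₀ (left_ne_zero_of_mul h), one_mul]
  rw [h_left, h_right]
  ring

noncomputable def phi32Term (q a b c d e z : ℂ) (t : ℕ) : ℂ :=
  qPoch q a t * qPoch q b t * qPoch q c t * z ^ t / (qPoch q q t * qPoch q d t * qPoch q e t)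

lemma phi32Term_zero (q a b c d e z : ℂ) : phi32Term q a b c d e z 0 = 1 := by
  simp [phi32Term, qPoch]

lemma mul_phi32Term_raise (q a b c d e z : ℂ) (s : ℕ) :
    (1 - a) * (1 - b) * (1 - c) * z / ((1 - d) * (1 - e) * (1 - e * q)) *
        phi32Term q (a * q) (b * q) (c * q) (d * q) (e * q ^ 2) z s =
      qPoch q a (s + 1) * qPoch q b (s + 1) * qPoch q c (s + 1) * z ^ (s + 1) /
        (qPoch q q s * qPoch q d (s + 1) * qPoch q e (s + 2)) := by
  rw [qPoch_succ' q e (s + 1), qPoch_succ', qPoch_succ', qPoch_succ', qPoch_succ', qPoch_succ',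
    phi32Term, mul_assoc e q q, ← sq q]
  simp only [div_eq_mul_inv, mul_inv]
  ring

lemma phi32Term_succ_sub_phi32Term {q a b c d e z : ℂ} {s : ℕ} (hq : qPoch q q (s + 1) ≠ 0)
    (he : qPoch q e (s + 2) ≠ 0) :
    phi32Term q a b c d e z (s + 1) - phi32Term q a b c d (e * q) (z * q) (s + 1) =
      qPoch q a (s + 1) * qPoch q b (s + 1) * qPoch q c (s + 1) * z ^ (s + 1) /
        (qPoch q q s * qPoch q d (s + 1) * qPoch q e (s + 2)) := by
  have key : (qPoch q e (s + 1))⁻¹ - q ^ (s + 1) * (qPoch q (e * q) (s + 1))⁻¹ =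
      (1 - q ^ (s + 1)) * (qPoch q e (s + 2))⁻¹ :=
    inv_qPoch_sub_pow_mul_inv_qPoch_mul he
  rw [qPoch_succ] at hq
  have hcancel : (1 - q * q ^ s) * (1 - q * q ^ s)⁻¹ = 1 :=
    mul_inv_cancel₀ (right_ne_zero_of_mul hq)
  rw [phi32Term, phi32Term, qPoch_succ q q s]
  simp only [div_eq_mul_inv, mul_inv]
  set P := qPoch q a (s + 1) * qPoch q b (s + 1) * qPoch q c (s + 1) * z ^ (s + 1)
  linear_combination P * (qPoch q q s)⁻¹ * (1 - q * q ^ s)⁻¹ * (qPoch q d (s + 1))⁻¹ * key +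
    P * (qPoch q q s)⁻¹ * (qPoch q d (s + 1))⁻¹ * (qPoch q e (s + 2))⁻¹ * hcancel

theorem phi32_contiguous_II_general (q : ℝ) (hq0 : 0 < q) (N : ℕ)
    (B C D E A : ℂ) (hA : A = (q : ℂ) ^ (-(N : ℤ)))
    (hE1 : E ≠ 1)
    (hden : ∀ t ≤ N, qPoch (q : ℂ) (q : ℂ) t ≠ 0 ∧ qPoch (q : ℂ) D t ≠ 0 ∧
      qPoch (q : ℂ) E t ≠ 0 ∧ qPoch (q : ℂ) (D * (q : ℂ)) t ≠ 0 ∧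
      qPoch (q : ℂ) (E * (q : ℂ)) t ≠ 0 ∧ qPoch (q : ℂ) (E * (q : ℂ) ^ 2) t ≠ 0)
    (phi : ℂ → ℂ → ℂ → ℂ → ℂ → ℂ → ℂ)
    (hphi : ∀ x₁ x₂ x₃ y₁ y₂ z : ℂ, phi x₁ x₂ x₃ y₁ y₂ z =
      ∑ t ∈ Finset.range (N + 1),
        qPoch (q : ℂ) x₁ t * qPoch (q : ℂ) x₂ t * qPoch (q : ℂ) x₃ t * z ^ t /
          (qPoch (q : ℂ) (q : ℂ) t * qPoch (q : ℂ) y₁ t * qPoch (q : ℂ) y₂ t)) :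
    (1 - A) * (1 - B) * (1 - C) * (D * E / (A * B * C)) /
        ((1 - D) * (1 - E) * (1 - E * (q : ℂ))) *
        phi (A * (q : ℂ)) (B * (q : ℂ)) (C * (q : ℂ)) (D * (q : ℂ)) (E * (q : ℂ) ^ 2)
          (D * E / (A * B * C))
      = phi A B C D E (D * E / (A * B * C))
        - phi A B C D (E * (q : ℂ)) (D * E * (q : ℂ) / (A * B * C)) := by
  have hphi' : ∀ x₁ x₂ x₃ y₁ y₂ z, phi x₁ x₂ x₃ y₁ y₂ z =
      ∑ t ∈ Finset.range (N + 1), phi32Term q x₁ x₂ x₃ y₁ y₂ z t := hphi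
  have hA_vanish : qPoch q A (N + 1) = 0 := by
    refine qPoch_eq_zero_of_mul_pow_eq_one ?_
    rw [hA, ← zpow_natCast, ← zpow_add₀ (by exact_mod_cast hq0.ne'), neg_add_cancel, zpow_zero]
  rw [hphi', hphi', hphi', Finset.mul_sum, ← Finset.sum_sub_distrib, Finset.sum_range_succ,
    Finset.sum_range_succ', mul_phi32Term_raise, hA_vanish, phi32Term_zero, phi32Term_zero,
    mul_div_right_comm (D * E)]
  simp only [zero_mul, zero_div, sub_self, add_zero]
  refine Finset.sum_congr rfl fun s hs => ?_
  obtain ⟨hq_s, -, -, -, hEq_s, -⟩ := hden (s + 1) (Finset.mem_range.mp hs)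
  have hE_s : qPoch q E (s + 2) ≠ 0 := by
    rw [qPoch_succ']
    exact mul_ne_zero (sub_ne_zero.mpr hE1.symm) hEq_s
  rw [mul_phi32Term_raise, phi32Term_succ_sub_phi32Term hq_s hE_s]

/-- Contiguous relation of type II for terminating `₃φ₂` series with `A = q^{-N}`. -/
theorem phi32_contiguous_II (q : ℝ) (hq0 : 0 < q) (hq1 : q < 1) (N : ℕ)
    (B C D E A : ℂ) (hA : A = (q : ℂ) ^ (-(N : ℤ)))
    (hB : B ≠ 0) (hC : C ≠ 0) (hD0 : D ≠ 0) (hE0 : E ≠ 0)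
    (hD1 : D ≠ 1) (hE1 : E ≠ 1) (hEq1 : E * (q : ℂ) ≠ 1)
    (hden : ∀ t ≤ N, qPoch (q : ℂ) (q : ℂ) t ≠ 0 ∧ qPoch (q : ℂ) D t ≠ 0 ∧
      qPoch (q : ℂ) E t ≠ 0 ∧ qPoch (q : ℂ) (D * (q : ℂ)) t ≠ 0 ∧
      qPoch (q : ℂ) (E * (q : ℂ)) t ≠ 0 ∧ qPoch (q : ℂ) (E * (q : ℂ) ^ 2) t ≠ 0)
    (phi : ℂ → ℂ → ℂ → ℂ → ℂ → ℂ → ℂ)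
    (hphi : ∀ x₁ x₂ x₃ y₁ y₂ z : ℂ, phi x₁ x₂ x₃ y₁ y₂ z =
      ∑ t ∈ Finset.range (N + 1),
        qPoch (q : ℂ) x₁ t * qPoch (q : ℂ) x₂ t * qPoch (q : ℂ) x₃ t * z ^ t /
          (qPoch (q : ℂ) (q : ℂ) t * qPoch (q : ℂ) y₁ t * qPoch (q : ℂ) y₂ t)) :
    (1 - A) * (1 - B) * (1 - C) * (D * E / (A * B * C)) /
        ((1 - D) * (1 - E) * (1 - E * (q : ℂ))) *
        phi (A * (q : ℂ)) (B * (q : ℂ)) (C * (q : ℂ)) (D * (q : ℂ)) (E * (q : ℂ) ^ 2)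
          (D * E / (A * B * C))
      = phi A B C D E (D * E / (A * B * C))
        - phi A B C D (E * (q : ℂ)) (D * E * (q : ℂ) / (A * B * C)) :=
  phi32_contiguous_II_general q hq0 N B C D E A hA hE1 hden phi hphi
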